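/- Let 𝒜_{(q₀,r)} = (Q,{a,b},δ) be an n-state synchronizing almost permutation automaton with sink state q₀ and pre-sink state r, and let k be a positive multiple of the order of the letter a. Then every reset word of the tail extension 𝒜_{(q₀,r)}(k,r) has length at least rt(𝒜_{(q₀,r)}) + n·k; that is, rt(𝒜_{(q₀,r)}(k,r)) ≥ rt(𝒜_{(q₀,r)}) + n·k. -/

import Mathlib

/-- The two letters of a binary alphabet. -/
inductive Letter where
  | a : Letter
  | b : Letter
deriving DecidableEq

/-- Extension of a transition function `δ : Q → Letter → Q` to words
(lists of letters), acting on the left: `δ(q, uv) = δ(δ(q, u), v)`. -/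
def deltaStar {Q : Type*} (δ : Q → Letter → Q) (q : Q) (w : List Letter) : Q :=
  w.foldl δ q

/-- `w` is a reset word for the automaton with transition function `δ`. -/
def IsResetWord {Q : Type*} (δ : Q → Letter → Q) (w : List Letter) : Prop :=
  ∀ p q : Q, deltaStar δ p w = deltaStar δ q w

/-- The reset threshold: the minimum length of a reset word. -/
noncomputable def resetThreshold {Q : Type*} (δ : Q → Letter → Q) : ℕ :=
  sInf {l : ℕ | ∃ w : List Letter, IsResetWord δ w ∧ w.length = l}

/-- The tail extension `𝒜(k, r)` of a binary DFA `𝒜 = (Q, {a,b}, δ)` with sink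
state `q0`: the state set is `Q ⊕ Fin k` with `Sum.inr i` playing the role of
the tail state `tᵢ`, and
`δ'(s,a) = δ(s,a)` for `s ∈ Q \ {q0}`, `δ'(q0,a) = t_{k-1}`, `δ'(t0,a) = t0`,
`δ'(tᵢ,a) = t_{i-1}` for `1 ≤ i ≤ k-1`; `δ'(s,b) = δ(s,b)` for `s ∈ Q \ {q0}`,
`δ'(t0,b) = t0`, and `δ'(s,b) = r` for `s ∈ {q0, t1, …, t_{k-1}}`. -/
def tailExt {Q : Type*} [DecidableEq Q] (δ : Q → Letter → Q) (q0 r : Q)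
    (k : ℕ) (hk : 0 < k) : Q ⊕ Fin k → Letter → Q ⊕ Fin k
  | Sum.inl s, Letter.a =>
      if s = q0 then Sum.inr ⟨k - 1, Nat.sub_lt hk Nat.one_pos⟩
      else Sum.inl (δ s Letter.a)
  | Sum.inl s, Letter.b =>
      if s = q0 then Sum.inl r else Sum.inl (δ s Letter.b)
  | Sum.inr i, Letter.a =>
      if (i : ℕ) = 0 then Sum.inr i
      else Sum.inr ⟨(i : ℕ) - 1, Nat.lt_of_le_of_lt (Nat.sub_le _ _) i.isLt⟩
  | Sum.inr i, Letter.b =>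
      if (i : ℕ) = 0 then Sum.inr i else Sum.inl r

/-!
Let `𝒜'` be the automaton obtained from `𝒜` by letting `b` send `q0` to `r`; for an almost
permutation automaton both letters of `𝒜'` are permutations. A reset word `w` of `𝒜(k,r)` sends
every state to the sink `t₀`, which can only be entered by reading `a^k` from `q0`. While the run
of `w` from `p ∈ Q` stays in `Q` it follows `𝒜'`, and so does an excursion into the tail that
returns through `b` to `r`, since in `𝒜'` the letter `a` fixes `q0` and `b` sends it to `r`.
Hence `w = u_p a^k v_p` with `𝒜'(p, u_p) = q0` for every `p`. As `𝒜'` is a permutation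
automaton, these `n` blocks `a^k` are pairwise disjoint; as `a^k` acts trivially on `𝒜`, deleting
them leaves a word of length `|w| - nk` with the same action as `w` on `𝒜`, and `w` resets `𝒜`
because each run of `𝒜` falls into the sink `q0` within `u_p`.
-/

open List Function Finset

namespace AlmostPermutation

variable {Q : Type*}

section Words

variable {σ : Q → Letter → Q}

@[simp]
theorem deltaStar_nil (q : Q) : deltaStar σ q [] = q := rfl

@[simp]
theorem deltaStar_cons (q : Q) (ℓ : Letter) (w : List Letter) :
    deltaStar σ q (ℓ :: w) = deltaStar σ (σ q ℓ) w := rfl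

@[simp]
theorem deltaStar_append (q : Q) (u v : List Letter) :
    deltaStar σ q (u ++ v) = deltaStar σ (deltaStar σ q u) v :=
  foldl_append ..

theorem deltaStar_replicate_of_fixed {q : Q} {ℓ : Letter} (h : σ q ℓ = q) (j : ℕ) :
    deltaStar σ q (replicate j ℓ) = q := by
  induction j with
  | zero => rfl
  | succ j ih => rw [replicate_succ, deltaStar_cons, h, ih]

theorem deltaStar_replicate_mul {ℓ : Letter} {p : ℕ}
    (hp : ∀ q, deltaStar σ q (replicate p ℓ) = q) (m : ℕ) (q : Q) :
    deltaStar σ q (replicate (m * p) ℓ) = q := by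
  induction m with
  | zero => simp
  | succ m ih => rw [Nat.succ_mul, replicate_add, deltaStar_append, ih, hp]

theorem deltaStar_of_isSink {z : Q} (hz : ∀ ℓ, σ z ℓ = z) (w : List Letter) :
    deltaStar σ z w = z := by
  induction w with
  | nil => rfl
  | cons ℓ w ih => rw [deltaStar_cons, hz, ih]

theorem deltaStar_eq_sink_of_prefix {z : Q} (hz : ∀ ℓ, σ z ℓ = z) {u w : List Letter}
    (huw : u <+: w) {q : Q} (hq : deltaStar σ q u = z) : deltaStar σ q w = z := by
  obtain ⟨v, rfl⟩ := huw
  rw [deltaStar_append, hq, deltaStar_of_isSink hz]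

theorem injective_deltaStar (hσ : ∀ ℓ, Injective (σ · ℓ)) (w : List Letter) :
    Injective (deltaStar σ · w) := by
  induction w with
  | nil => exact injective_id
  | cons ℓ w ih => exact ih.comp (hσ ℓ)

theorem deltaStar_eq_sink_of_isResetWord {z : Q} (hz : ∀ ℓ, σ z ℓ = z) {w : List Letter}
    (hw : IsResetWord σ w) (q : Q) : deltaStar σ q w = z := by
  rw [hw q z, deltaStar_of_isSink hz]

theorem exists_isResetWord_of_forall_reach_sink [Finite Q] {z : Q} (hz : ∀ ℓ, σ z ℓ = z)
    (hreach : ∀ q, ∃ w, deltaStar σ q w = z) : ∃ w, IsResetWord σ w := by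
  classical
  have := Fintype.ofFinite Q
  suffices ∀ S : Finset Q, ∃ w, ∀ q ∈ S, deltaStar σ q w = z by
    obtain ⟨w, hw⟩ := this univ
    exact ⟨w, fun p q => by rw [hw p (mem_univ p), hw q (mem_univ q)]⟩
  intro S
  induction S using Finset.induction_on with
  | empty => exact ⟨[], by simp⟩
  | insert q S _ ih =>
    obtain ⟨w, hw⟩ := ih
    obtain ⟨v, hv⟩ := hreach (deltaStar σ q w)
    refine ⟨w ++ v, fun p hp => ?_⟩
    rw [deltaStar_append]
    rcases mem_insert.1 hp with rfl | hp
    · exact hv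
    · rw [hw p hp, deltaStar_of_isSink hz]

theorem resetThreshold_le {w : List Letter} (hw : IsResetWord σ w) :
    resetThreshold σ ≤ w.length :=
  Nat.sInf_le ⟨w, hw, rfl⟩

theorem le_resetThreshold {N : ℕ} (hsync : ∃ w, IsResetWord σ w)
    (h : ∀ w, IsResetWord σ w → N ≤ w.length) : N ≤ resetThreshold σ := by
  obtain ⟨w, hw⟩ := hsync
  exact le_csInf ⟨_, w, hw, rfl⟩ (by rintro _ ⟨w, hw, rfl⟩; exact h w hw)

end Words

section Blocks

variable {σ : Q → Letter → Q} {z : Q}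

theorem eq_of_deltaStar_append_replicate (hσ : ∀ ℓ, Injective (σ · ℓ))
    (hz : σ z Letter.a = z) {p p' : Q} {u : List Letter} {j : ℕ}
    (hp : deltaStar σ p u = z) (hp' : deltaStar σ p' (u ++ replicate j Letter.a) = z) :
    p = p' :=
  injective_deltaStar hσ (u ++ replicate j Letter.a) <| by
    show deltaStar σ p _ = deltaStar σ p' _
    rw [deltaStar_append, hp, deltaStar_replicate_of_fixed hz, hp']

theorem append_replicate_prefix_of_ne (hσ : ∀ ℓ, Injective (σ · ℓ))
    (hz : σ z Letter.a = z) {k : ℕ} {w u u' : List Letter} {p p' : Q} (hne : p ≠ p')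
    (hle : u.length ≤ u'.length) (hu : u ++ replicate k Letter.a <+: w)
    (hp : deltaStar σ p u = z) (hu' : u' <+: w) (hp' : deltaStar σ p' u' = z) :
    u ++ replicate k Letter.a <+: u' := by
  refine prefix_of_prefix_length_le hu hu' (not_lt.1 fun hlt => hne ?_)
  rw [length_append, length_replicate] at hlt
  set j := u'.length - u.length
  have hj : u ++ replicate j Letter.a <+: w :=
    ((prefix_append_right_inj u).2
      (prefix_replicate_iff.2 ⟨by rw [length_replicate]; omega, by rw [length_replicate]⟩)).trans hu
  have hlen : (u ++ replicate j Letter.a).length = u'.length := by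
    rw [length_append, length_replicate]; omega
  have hu'_eq : u' = u ++ replicate j Letter.a :=
    (prefix_of_prefix_length_le hu' hj hlen.ge).eq_of_length hlen.symm
  exact eq_of_deltaStar_append_replicate hσ hz hp (hu'_eq ▸ hp')

theorem exists_sameAction_of_blocks (hσ : ∀ ℓ, Injective (σ · ℓ))
    (hz : σ z Letter.a = z) {τ : Q → Letter → Q} {k : ℕ}
    (hτ : ∀ q, deltaStar τ q (replicate k Letter.a) = q) (u : Q → List Letter)
    (S : Finset Q) :
    ∀ w, (∀ p ∈ S, u p ++ replicate k Letter.a <+: w ∧ deltaStar σ p (u p) = z) →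
      ∃ w', w'.length + S.card * k = w.length ∧ ∀ q, deltaStar τ q w' = deltaStar τ q w := by
  classical
  induction S using Finset.induction_on_max_value (fun p => (u p).length) with
  | empty => exact fun w _ => ⟨w, by simp, fun _ => rfl⟩
  | insert p S hpS hmax ih =>
    intro w hw
    obtain ⟨⟨v, rfl⟩, hp⟩ := hw p (mem_insert_self p S)
    have hup : u p <+: u p ++ replicate k Letter.a ++ v := ⟨replicate k Letter.a ++ v, by simp⟩
    obtain ⟨w', hlen, hact⟩ := ih (u p ++ v) fun x hx =>
      have ⟨hux, hx'⟩ := hw x (mem_insert_of_mem hx)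
      ⟨(append_replicate_prefix_of_ne hσ hz (ne_of_mem_of_not_mem hx hpS) (hmax x hx) hux hx'
        hup hp).trans (prefix_append _ _), hx'⟩
    refine ⟨w', ?_, fun q => ?_⟩
    · simp only [card_insert_of_notMem hpS, length_append, length_replicate] at hlen ⊢
      linarith
    · rw [hact, deltaStar_append, deltaStar_append, deltaStar_append, hτ]

end Blocks

section PermCompletion

variable [DecidableEq Q] {δ : Q → Letter → Q} {q0 r : Q}

variable (δ q0 r) in
def permCompletion : Q → Letter → Q
  | q, Letter.a => δ q Letter.a
  | q, Letter.b => if q = q0 then r else δ q Letter.b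

theorem permCompletion_of_ne {p : Q} (hp : p ≠ q0) (ℓ : Letter) :
    permCompletion δ q0 r p ℓ = δ p ℓ := by
  cases ℓ <;> simp [permCompletion, hp]

theorem permCompletion_injective [Finite Q] (hsink : δ q0 Letter.b = q0)
    (hrb : δ r Letter.b = q0) (hb : Set.SurjOn (δ · Letter.b) {r}ᶜ {r}ᶜ)
    (ha : Injective (δ · Letter.a)) : ∀ ℓ, Injective (permCompletion δ q0 r · ℓ)
  | Letter.a => ha
  | Letter.b => Finite.injective_iff_surjective.2 fun y => by
    by_cases hyr : y = r
    · exact ⟨q0, by simp [permCompletion, hyr]⟩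
    by_cases hyq : y = q0
    · exact ⟨r, by simp [permCompletion, hrb, hyq, Ne.symm (hyq ▸ hyr)]⟩
    obtain ⟨s, -, rfl⟩ := hb hyr
    have hs : s ≠ q0 := by rintro rfl; exact hyq hsink
    exact ⟨s, permCompletion_of_ne hs _⟩

theorem deltaStar_eq_of_deltaStar_permCompletion (hsink : ∀ ℓ, δ q0 ℓ = q0) {u : List Letter} :
    ∀ {p : Q}, deltaStar (permCompletion δ q0 r) p u = q0 → deltaStar δ p u = q0 := by
  induction u with
  | nil => exact id
  | cons ℓ u ih =>
    intro p h
    by_cases hp : p = q0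
    · rw [hp, deltaStar_of_isSink hsink]
    · rw [deltaStar_cons, permCompletion_of_ne hp] at h
      exact ih h

end PermCompletion

section TailExtension

variable [DecidableEq Q] {δ : Q → Letter → Q} {q0 r : Q} {k : ℕ} {hk : 0 < k}

theorem tailExt_sink (ℓ : Letter) :
    tailExt δ q0 r k hk (Sum.inr ⟨0, hk⟩) ℓ = Sum.inr ⟨0, hk⟩ := by
  cases ℓ <;> rfl

theorem tailExt_inl_eq_permCompletion {s : Q} {ℓ : Letter} (h : ¬(s = q0 ∧ ℓ = Letter.a)) :
    tailExt δ q0 r k hk (Sum.inl s) ℓ = Sum.inl (permCompletion δ q0 r s ℓ) := by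
  cases ℓ <;> by_cases hs : s = q0 <;> simp_all [tailExt, permCompletion]

theorem tailExt_inl_of_ne {s : Q} (hs : s ≠ q0) (ℓ : Letter) :
    tailExt δ q0 r k hk (Sum.inl s) ℓ = Sum.inl (δ s ℓ) := by
  rw [tailExt_inl_eq_permCompletion (by tauto), permCompletion_of_ne hs]

theorem tailExt_inr_succ_a {i : ℕ} (hi : i + 1 < k) :
    tailExt δ q0 r k hk (Sum.inr ⟨i + 1, hi⟩) Letter.a = Sum.inr ⟨i, by omega⟩ := by
  simp [tailExt]

theorem tailExt_inr_succ_b {i : ℕ} (hi : i + 1 < k) :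
    tailExt δ q0 r k hk (Sum.inr ⟨i + 1, hi⟩) Letter.b = Sum.inl r := by
  simp [tailExt]

theorem deltaStar_tailExt_inr_replicate {i : ℕ} (hi : i < k) :
    deltaStar (tailExt δ q0 r k hk) (Sum.inr ⟨i, hi⟩) (replicate i Letter.a) =
      Sum.inr ⟨0, hk⟩ := by
  induction i with
  | zero => rfl
  | succ i ih => rw [replicate_succ, deltaStar_cons, tailExt_inr_succ_a, ih]

theorem tailExt_q0_a :
    tailExt δ q0 r k hk (Sum.inl q0) Letter.a = Sum.inr ⟨k - 1, Nat.sub_lt hk Nat.one_pos⟩ := by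
  simp [tailExt]

theorem deltaStar_tailExt_q0_replicate :
    deltaStar (tailExt δ q0 r k hk) (Sum.inl q0) (replicate k Letter.a) = Sum.inr ⟨0, hk⟩ := by
  obtain ⟨k, rfl⟩ := Nat.exists_eq_add_one_of_ne_zero hk.ne'
  rw [replicate_succ, deltaStar_cons, tailExt_q0_a]
  exact deltaStar_tailExt_inr_replicate _

theorem exists_deltaStar_tailExt_inl_eq_sink {w : List Letter} :
    ∀ {p : Q}, deltaStar δ p w = q0 →
      ∃ v, deltaStar (tailExt δ q0 r k hk) (Sum.inl p) v = Sum.inr ⟨0, hk⟩ := by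
  induction w with
  | nil => rintro p rfl; exact ⟨_, deltaStar_tailExt_q0_replicate⟩
  | cons ℓ w ih =>
    intro p hp
    by_cases hpq : p = q0
    · exact hpq ▸ ⟨_, deltaStar_tailExt_q0_replicate⟩
    obtain ⟨v, hv⟩ := ih hp
    exact ⟨ℓ :: v, by rwa [deltaStar_cons, tailExt_inl_of_ne hpq]⟩

theorem exists_isResetWord_tailExt [Finite Q] (hsink : ∀ ℓ, δ q0 ℓ = q0)
    (hsync : ∃ w, IsResetWord δ w) : ∃ w, IsResetWord (tailExt δ q0 r k hk) w := by
  refine exists_isResetWord_of_forall_reach_sink tailExt_sink ?_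
  obtain ⟨w, hw⟩ := hsync
  rintro (p | ⟨i, hi⟩)
  · exact exists_deltaStar_tailExt_inl_eq_sink (deltaStar_eq_sink_of_isResetWord hsink hw p)
  · exact ⟨_, deltaStar_tailExt_inr_replicate hi⟩

theorem deltaStar_tailExt_inr_eq_sink {w : List Letter} :
    ∀ {i : ℕ} {hi : i < k},
      deltaStar (tailExt δ q0 r k hk) (Sum.inr ⟨i, hi⟩) w = Sum.inr ⟨0, hk⟩ →
      replicate i Letter.a <+: w ∨ ∃ j < i, ∃ w', w = replicate j Letter.a ++ Letter.b :: w' ∧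
        deltaStar (tailExt δ q0 r k hk) (Sum.inl r) w' = Sum.inr ⟨0, hk⟩ := by
  induction w with
  | nil => intro i hi h; simp_all
  | cons ℓ w ih =>
    rintro (_ | i) hi h
    · simp
    cases ℓ with
    | a =>
      rw [deltaStar_cons, tailExt_inr_succ_a] at h
      rcases ih h with hpre | ⟨j, hj, w', rfl, h'⟩
      · exact Or.inl (by simpa [replicate_succ] using hpre)
      · exact Or.inr ⟨j + 1, by omega, w', by simp [replicate_succ], h'⟩
    | b =>
      rw [deltaStar_cons, tailExt_inr_succ_b] at h
      exact Or.inr ⟨0, by omega, w, rfl, h⟩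

theorem exists_block_of_deltaStar_tailExt (hsink : ∀ ℓ, δ q0 ℓ = q0) :
    ∀ (w : List Letter) (p : Q),
      deltaStar (tailExt δ q0 r k hk) (Sum.inl p) w = Sum.inr ⟨0, hk⟩ →
      ∃ u, u ++ replicate k Letter.a <+: w ∧ deltaStar (permCompletion δ q0 r) p u = q0
  | [], p, h => by simp at h
  | ℓ :: w, p, h => by
    by_cases hpa : p = q0 ∧ ℓ = Letter.a
    · obtain ⟨hp, rfl⟩ := hpa
      rw [hp, deltaStar_cons, tailExt_q0_a] at h
      rcases deltaStar_tailExt_inr_eq_sink h with hpre | ⟨j, -, w', hw, h'⟩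
      · obtain ⟨k, rfl⟩ := Nat.exists_eq_add_one_of_ne_zero hk.ne'
        exact ⟨[], by simpa [replicate_succ] using hpre, hp⟩
      · have : w'.length < w.length := by simp [hw]; omega
        obtain ⟨u, hu, hpu⟩ := exists_block_of_deltaStar_tailExt hsink w' r h'
        refine ⟨Letter.a :: (replicate j Letter.a ++ Letter.b :: u), by simpa [hw] using hu, ?_⟩
        simp [hp, permCompletion, hsink, deltaStar_replicate_of_fixed, hpu]
    · rw [deltaStar_cons, tailExt_inl_eq_permCompletion hpa] at h
      obtain ⟨u, hu, hpu⟩ := exists_block_of_deltaStar_tailExt hsink w _ h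
      exact ⟨ℓ :: u, by simpa using hu, hpu⟩
termination_by w => w.length

end TailExtension

end AlmostPermutation

open AlmostPermutation

theorem resetThreshold_tailExt_ge_general
    {Q : Type*} [Fintype Q] [DecidableEq Q]
    (δ : Q → Letter → Q) (q0 r : Q) (n : ℕ)
    -- `𝒜` has `n` states
    (hn : Fintype.card Q = n)
    -- `q0` is a sink state
    (hsink : ∀ ℓ : Letter, δ q0 ℓ = q0)
    -- `𝒜` is synchronizing
    (hsync : ∃ w : List Letter, IsResetWord δ w)
    -- `r` is the unique state of `Q \ {q0}` with `δ(r, b) = q0` (the pre-sink state)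
    (hrb : δ r Letter.b = q0)
    -- the letter `b` acts as a permutation on `Q \ {r}`
    (hb : Set.BijOn (fun s => δ s Letter.b) {r}ᶜ {r}ᶜ)
    -- the letter `a` acts as a permutation on `Q`
    (ha : Function.Bijective fun s => δ s Letter.a)
    -- `ord` is the order of the letter `a`: the least `j ≥ 1` such that `a^j` acts as the identity
    (ord : ℕ)
    (hordid : ∀ q : Q, deltaStar δ q (List.replicate ord Letter.a) = q)
    -- `k` is a positive multiple of the order of `a`
    (k m : ℕ) (hkm : k = m * ord) (hk : 0 < k) :
    (∀ w : List Letter, IsResetWord (tailExt δ q0 r k hk) w →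
        resetThreshold δ + n * k ≤ w.length) ∧
      resetThreshold δ + n * k ≤ resetThreshold (tailExt δ q0 r k hk) := by
  have hperm := permCompletion_injective (hsink Letter.b) hrb hb.surjOn ha.injective
  have hak : ∀ q, deltaStar δ q (replicate k Letter.a) = q :=
    hkm ▸ deltaStar_replicate_mul hordid m
  have lower : ∀ w, IsResetWord (tailExt δ q0 r k hk) w → resetThreshold δ + n * k ≤ w.length := by
    intro w hw
    choose u hu using fun p => exists_block_of_deltaStar_tailExt hsink w p
      (deltaStar_eq_sink_of_isResetWord tailExt_sink hw _)
    obtain ⟨w', hlen, hact⟩ :=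
      exists_sameAction_of_blocks hperm (hsink Letter.a) hak u univ w fun p _ => hu p
    have hw_sink : ∀ p, deltaStar δ p w = q0 := fun p =>
      deltaStar_eq_sink_of_prefix hsink ((prefix_append _ _).trans (hu p).1)
        (deltaStar_eq_of_deltaStar_permCompletion hsink (hu p).2)
    have hreset : IsResetWord δ w' := fun p q => by rw [hact, hact, hw_sink, hw_sink]
    have := resetThreshold_le hreset
    rw [card_univ, hn] at hlen
    omega
  exact ⟨lower, le_resetThreshold (exists_isResetWord_tailExt hsink hsync) lower⟩

/-- Lower bound in Vorel's lemma: every reset word of the tail extension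
`𝒜(k,r)` has length at least `rt(𝒜) + n·k`; that is,
`rt(𝒜(k,r)) ≥ rt(𝒜) + n·k`. -/
theorem resetThreshold_tailExt_ge
    {Q : Type*} [Fintype Q] [DecidableEq Q]
    (δ : Q → Letter → Q) (q0 r : Q) (n : ℕ)
    -- `𝒜` has `n` states
    (hn : Fintype.card Q = n)
    -- `q0` is a sink state
    (hsink : ∀ ℓ : Letter, δ q0 ℓ = q0)
    -- `𝒜` is synchronizing
    (hsync : ∃ w : List Letter, IsResetWord δ w)
    -- `r` is the unique state of `Q \ {q0}` with `δ(r, b) = q0` (the pre-sink state)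
    (hrne : r ≠ q0)
    (hrb : δ r Letter.b = q0)
    (hruniq : ∀ s : Q, s ≠ q0 → δ s Letter.b = q0 → s = r)
    -- the letter `b` acts as a permutation on `Q \ {r}`
    (hb : Set.BijOn (fun s => δ s Letter.b) {r}ᶜ {r}ᶜ)
    -- the letter `a` acts as a permutation on `Q`
    (ha : Function.Bijective fun s => δ s Letter.a)
    -- `ord` is the order of the letter `a`: the least `j ≥ 1` such that `a^j` acts as the identity
    (ord : ℕ) (hord : 0 < ord)
    (hordid : ∀ q : Q, deltaStar δ q (List.replicate ord Letter.a) = q)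
    (hordleast : ∀ j : ℕ, 0 < j →
      (∀ q : Q, deltaStar δ q (List.replicate j Letter.a) = q) → ord ≤ j)
    -- `k` is a positive multiple of the order of `a`
    (k m : ℕ) (hm : 0 < m) (hkm : k = m * ord) (hk : 0 < k) :
    (∀ w : List Letter, IsResetWord (tailExt δ q0 r k hk) w →
        resetThreshold δ + n * k ≤ w.length) ∧
      resetThreshold δ + n * k ≤ resetThreshold (tailExt δ q0 r k hk) :=
  resetThreshold_tailExt_ge_general δ q0 r n hn hsink hsync hrb hb ha ord hordid k m hkm hk
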